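/- arXiv:2302.09875 — 2 statements merged into one kernel-verified Lean document; each statement's English description precedes it below -/
import Mathlib

section
/- Let A, C ∈ ℝ^{n×n} with A invertible and C symmetric positive definite, η ∈ ℝ. Every eigenvalue of the block matrix N = [[-C, -A], [Aᵀ, 0]] has nonpositive real part; moreover no eigenvalue is purely imaginary, so all eigenvalues have strictly negative real part (N is Hurwitz). -/
/-!
If `N v = μ v` with `v = (x, y)`, then `2 Re μ ‖v‖² = v* (N + Nᴴ) v = -2 x* C x`: the
off-diagonal blocks `-A` and `Aᵀ` are skew-adjoint to each other and cancel in `N + Nᴴ`.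
Hence `Re μ < 0` as soon as `x ≠ 0`, by positive definiteness of `C`. If `x = 0`, the first
block row of `N v = μ v` reads `-A y = 0`, so `y = 0` by invertibility of `A`, and `v = 0`.
-/

open Matrix ComplexOrder

namespace Matrix

variable {ι κ : Type*} [Fintype ι] [Fintype κ]

theorem re_star_dotProduct_map_ofReal_mulVec (C : Matrix ι ι ℝ) (x : ι → ℂ) :
    (star x ⬝ᵥ (C.map Complex.ofReal *ᵥ x)).re =
      (fun i => (x i).re) ⬝ᵥ (C *ᵥ fun i => (x i).re) +
        (fun i => (x i).im) ⬝ᵥ (C *ᵥ fun i => (x i).im) := by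
  simp only [dotProduct, mulVec, map_apply, Pi.star_apply, Complex.re_sum, Complex.mul_re,
    Complex.mul_im, RCLike.star_def, Complex.conj_re, Complex.conj_im, Complex.ofReal_re,
    Complex.ofReal_im, Finset.mul_sum, ← Finset.sum_add_distrib]
  exact Finset.sum_congr rfl fun i _ => Finset.sum_congr rfl fun j _ => by ring

theorem PosDef.re_star_dotProduct_map_ofReal_mulVec_pos {C : Matrix ι ι ℝ} (hC : C.PosDef)
    {x : ι → ℂ} (hx : x ≠ 0) : 0 < (star x ⬝ᵥ (C.map Complex.ofReal *ᵥ x)).re := by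
  rw [re_star_dotProduct_map_ofReal_mulVec]
  have hre := hC.posSemidef.dotProduct_mulVec_nonneg fun i => (x i).re
  have him := hC.posSemidef.dotProduct_mulVec_nonneg fun i => (x i).im
  simp only [star_trivial] at hre him
  obtain ⟨i, hi⟩ := Function.ne_iff.mp hx
  by_cases hre0 : (fun i => (x i).re) = 0
  · have him0 : (fun i => (x i).im) ≠ 0 := fun him0 =>
      hi (Complex.ext (congrFun hre0 i) (congrFun him0 i))
    simpa using add_lt_add_of_le_of_lt hre (hC.dotProduct_mulVec_pos him0)
  · simpa using add_lt_add_of_lt_of_le (hC.dotProduct_mulVec_pos hre0) him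

theorem star_dotProduct_add_conjTranspose_mulVec {M : Matrix ι ι ℂ} {v : ι → ℂ} {μ : ℂ}
    (h : M *ᵥ v = μ • v) :
    star v ⬝ᵥ ((M + Mᴴ) *ᵥ v) = (2 * μ.re : ℝ) * (star v ⬝ᵥ v) := by
  have hMv : star v ⬝ᵥ (M *ᵥ v) = μ * (star v ⬝ᵥ v) := by
    rw [h, dotProduct_smul, smul_eq_mul]
  have hMHv : star v ⬝ᵥ (Mᴴ *ᵥ v) = star μ * (star v ⬝ᵥ v) := by
    rw [star_dotProduct, star_mulVec, conjTranspose_conjTranspose, ← dotProduct_mulVec, hMv,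
      star_mul', ← star_dotProduct]
  rw [add_mulVec, dotProduct_add, hMv, hMHv, ← add_mul, RCLike.star_def, Complex.add_conj]

theorem re_neg_of_mulVec_eq_smul {M : Matrix ι ι ℂ} {v : ι → ℂ} {μ : ℂ}
    (h : M *ᵥ v = μ • v) (hM : (star v ⬝ᵥ ((M + Mᴴ) *ᵥ v)).re < 0) : μ.re < 0 := by
  rw [star_dotProduct_add_conjTranspose_mulVec h, Complex.re_ofReal_mul] at hM
  have hv : 0 ≤ (star v ⬝ᵥ v).re := (Complex.nonneg_iff.mp (dotProduct_star_self_nonneg v)).1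
  by_contra! hμ
  exact hM.not_ge (by positivity)

theorem star_dotProduct_map_ofReal_fromBlocks_add_conjTranspose_mulVec {C : Matrix ι ι ℝ}
    (hC : C.IsSymm) (A : Matrix ι κ ℝ) (x : ι → ℂ) (y : κ → ℂ) :
    star (x ⊕ᵥ y) ⬝ᵥ (((fromBlocks (-C) (-A) Aᵀ 0).map Complex.ofReal +
        ((fromBlocks (-C) (-A) Aᵀ 0).map Complex.ofReal)ᴴ) *ᵥ (x ⊕ᵥ y)) =
      -2 * (star x ⬝ᵥ (C.map Complex.ofReal *ᵥ x)) := by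
  have hMH : ((fromBlocks (-C) (-A) Aᵀ 0).map Complex.ofReal)ᴴ =
      (fromBlocks (-C) (-A) Aᵀ 0)ᵀ.map Complex.ofReal := by
    rw [← conjTranspose_eq_transpose_of_trivial (fromBlocks (-C) (-A) Aᵀ 0),
      conjTranspose_map _ fun r => (Complex.conj_ofReal r).symm]
  have hsum : (fromBlocks (-C) (-A) Aᵀ 0).map Complex.ofReal +
      ((fromBlocks (-C) (-A) Aᵀ 0).map Complex.ofReal)ᴴ =
      fromBlocks (-(2 : ℂ) • C.map Complex.ofReal) 0 0 0 := by
    rw [hMH, ← Matrix.map_add _ Complex.ofReal_add, fromBlocks_transpose, fromBlocks_add]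
    simp only [transpose_neg, transpose_transpose, transpose_zero, hC.eq, neg_add_cancel,
      add_neg_cancel, add_zero, fromBlocks_map]
    ext (i | i) (j | j) <;> simp; ring
  rw [hsum, fromBlocks_mulVec]
  simp [Function.star_sumElim, neg_mulVec, smul_mulVec, dotProduct_smul]

theorem eq_zero_of_fromBlocks_mulVec_eq_smul {K : Type*} [Field K] (P : Matrix ι ι K)
    {B : Matrix ι κ K} (hB : Function.Injective B.mulVec) (R : Matrix κ ι K) (S : Matrix κ κ K)
    {μ : K} {y : κ → K} (h : fromBlocks P B R S *ᵥ ((0 : ι → K) ⊕ᵥ y) = μ • ((0 : ι → K) ⊕ᵥ y)) :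
    y = 0 := by
  have hBy : B *ᵥ y = 0 :=
    funext fun i => by simpa [fromBlocks_mulVec] using congrFun h (Sum.inl i)
  exact hB (hBy.trans (mulVec_zero B).symm)

end Matrix

theorem stmt8 {n : ℕ} (A C : Matrix (Fin n) (Fin n) ℝ) (hA : IsUnit A) (hC : C.PosDef)
    (N : Matrix (Fin n ⊕ Fin n) (Fin n ⊕ Fin n) ℝ)
    (hN : N = Matrix.fromBlocks (-C) (-A) Aᵀ 0) :
    ∀ μ : ℂ,
      Module.End.HasEigenvalue (Matrix.toLin' (N.map (Complex.ofReal : ℝ → ℂ))) μ →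
        μ.re ≤ 0 ∧ μ.re ≠ 0 := by
  intro μ hμ
  subst hN
  obtain ⟨v, hv⟩ := hμ.exists_hasEigenvector
  have hNv : (fromBlocks (-C) (-A) Aᵀ 0).map Complex.ofReal *ᵥ v = μ • v := by
    simpa [toLin'_apply] using hv.apply_eq_smul
  obtain ⟨x, y, rfl⟩ : ∃ x y, v = x ⊕ᵥ y := ⟨_, _, (Sum.elim_comp_inl_inr v).symm⟩
  have hx : x ≠ 0 := by
    rintro rfl
    have hA' : Function.Injective ((-A).map Complex.ofReal).mulVec :=
      mulVec_injective_iff_isUnit.mpr (hA.neg.map Complex.ofRealHom.mapMatrix)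
    rw [fromBlocks_map] at hNv
    obtain rfl := eq_zero_of_fromBlocks_mulVec_eq_smul _ hA' _ _ hNv
    exact hv.2 (Sum.elim_zero_zero)
  have hre : μ.re < 0 := by
    refine re_neg_of_mulVec_eq_smul hNv ?_
    rw [star_dotProduct_map_ofReal_fromBlocks_add_conjTranspose_mulVec
      (isHermitian_iff_isSymm.mp hC.isHermitian)]
    simpa using hC.re_star_dotProduct_map_ofReal_mulVec_pos hx
  exact ⟨hre.le, hre.ne⟩
end

section
/- Let A, C ∈ ℝ^{n×n} with A invertible and C symmetric positive definite, and η ∈ ℝ. Then every solution of the linear system λ̇ₜ = (-C + ηA)λₜ - Axₜ, ẋₜ = (Aᵀ + η²A - ηC)λₜ - ηAxₜ converges to the origin as t → ∞, for any initial condition in ℝⁿ × ℝⁿ. -/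
/-!
Substituting `y = x - η λ` turns the system into the saddle-point flow `λ' = -Cλ - Ay`,
`y' = Aᵀλ`. Along it the energy `‖λ‖² + ‖y‖²` has derivative `-2⟪λ, Cλ⟫`, which only dissipates
in `λ`; tilting it by a small cross term `2ε⟪y, Aᵀλ⟫` adds `-2ε‖Ay‖²` to the derivative, and for
`ε` small the tilted energy `V` is comparable to `‖λ‖² + ‖y‖²` and satisfies `V' ≤ -k V` by
coercivity of `C` and invertibility of `A`. Grönwall then gives `V t ≤ V 0 e^{-kt}`.
-/

open Filter Matrix

open scoped InnerProduct RealInnerProductSpace Topology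

lemma le_mul_exp_of_hasDerivAt_le_mul {f f' : ℝ → ℝ} {K : ℝ}
    (hf : ∀ t, 0 ≤ t → HasDerivAt f (f' t) t) (hbound : ∀ t, 0 ≤ t → f' t ≤ K * f t)
    {t : ℝ} (ht : 0 ≤ t) : f t ≤ f 0 * Real.exp (K * t) := by
  have h := le_gronwallBound_of_liminf_deriv_right_le (f' := f') (δ := f 0) (K := K) (ε := 0)
    (a := 0) (b := t)
    (fun s hs => (hf s hs.1).continuousAt.continuousWithinAt)
    (fun s hs _ hr => (hf s hs.1).hasDerivWithinAt.liminf_right_slope_le hr) le_rfl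
    (fun s hs => by simpa using hbound s hs.1) t ⟨ht, le_rfl⟩
  rwa [gronwallBound_ε0, sub_zero] at h

lemma exists_pos_mul_sq_le_inner_map_of_pos {E : Type*} [NormedAddCommGroup E]
    [InnerProductSpace ℝ E] [FiniteDimensional ℝ E] (T : E →L[ℝ] E)
    (hT : ∀ v, v ≠ 0 → 0 < ⟪v, T v⟫) : ∃ c > 0, ∀ v, c * ‖v‖ ^ 2 ≤ ⟪v, T v⟫ := by
  rcases subsingleton_or_nontrivial E with _ | _
  · exact ⟨1, one_pos, fun v => by simp [Subsingleton.elim v 0]⟩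
  obtain ⟨v₀, hv₀, hmin⟩ := (isCompact_sphere (0 : E) 1).exists_isMinOn
    (NormedSpace.sphere_nonempty.2 zero_le_one)
    (by fun_prop : Continuous fun v => ⟪v, T v⟫).continuousOn
  have hv₀ne : v₀ ≠ 0 := ne_zero_of_mem_unit_sphere ⟨v₀, hv₀⟩
  refine ⟨⟪v₀, T v₀⟫, hT v₀ hv₀ne, fun v => ?_⟩
  rcases eq_or_ne v 0 with rfl | hv
  · simp
  have hnv : 0 < ‖v‖ := norm_pos_iff.2 hv
  have hw : ‖v‖⁻¹ • v ∈ Metric.sphere (0 : E) 1 := by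
    simp [norm_smul, hnv.ne']
  have h := hmin hw
  simp only [Set.mem_ofPred_eq, map_smul, inner_smul_left, inner_smul_right,
    conj_trivial] at h
  calc ⟪v₀, T v₀⟫ * ‖v‖ ^ 2 ≤ ‖v‖⁻¹ * (‖v‖⁻¹ * ⟪v, T v⟫) * ‖v‖ ^ 2 := by gcongr
    _ = ⟪v, T v⟫ := by field_simp

lemma tendsto_prod_zero_of_norm_sq_add_le {E F : Type*} [NormedAddCommGroup E]
    [NormedAddCommGroup F] {u : ℝ → E} {y : ℝ → F} {g : ℝ → ℝ}
    (hg : Tendsto g atTop (𝓝 0)) (h : ∀ᶠ t in atTop, ‖u t‖ ^ 2 + ‖y t‖ ^ 2 ≤ g t) :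
    Tendsto (fun t => (u t, y t)) atTop (𝓝 0) := by
  refine squeeze_zero_norm' (h.mono fun t ht => ?_) (by simpa using hg.sqrt)
  rw [Prod.norm_mk]
  exact max_le (Real.le_sqrt_of_sq_le (by nlinarith [sq_nonneg ‖y t‖]))
    (Real.le_sqrt_of_sq_le (by nlinarith [sq_nonneg ‖u t‖]))

section SaddleFlow

variable {E F : Type*} [NormedAddCommGroup E] [InnerProductSpace ℝ E] [CompleteSpace E]
  [NormedAddCommGroup F] [InnerProductSpace ℝ F] [CompleteSpace F]

noncomputable def saddleLyapunov (B : F →L[ℝ] E) (ε : ℝ) (u : E) (y : F) : ℝ :=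
  ‖u‖ ^ 2 + ‖y‖ ^ 2 + 2 * ε * ⟪y, (B†) u⟫

lemma abs_two_mul_inner_adjoint_le {B : F →L[ℝ] E} {ε : ℝ} (hε : 0 ≤ ε) (hεB : 2 * ε * ‖B‖ ≤ 1)
    (u : E) (y : F) : |2 * ε * ⟪y, (B†) u⟫| ≤ (‖u‖ ^ 2 + ‖y‖ ^ 2) / 2 := by
  have hBu : ‖(B†) u‖ ≤ ‖B‖ * ‖u‖ := by
    simpa only [LinearIsometryEquiv.norm_map] using (B†).le_opNorm u
  calc |2 * ε * ⟪y, (B†) u⟫| = 2 * ε * |⟪y, (B†) u⟫| := by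
        rw [abs_mul, abs_of_nonneg (by positivity)]
    _ ≤ 2 * ε * (‖y‖ * (‖B‖ * ‖u‖)) := by
        gcongr
        exact (abs_real_inner_le_norm _ _).trans (by gcongr)
    _ = (2 * ε * ‖B‖) * (‖u‖ * ‖y‖) := by ring
    _ ≤ 1 * (‖u‖ * ‖y‖) := by gcongr
    _ ≤ (‖u‖ ^ 2 + ‖y‖ ^ 2) / 2 := by nlinarith [sq_nonneg (‖u‖ - ‖y‖)]

lemma saddleLyapunov_bounds {B : F →L[ℝ] E} {ε : ℝ} (hε : 0 ≤ ε) (hεB : 2 * ε * ‖B‖ ≤ 1)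
    (u : E) (y : F) :
    (‖u‖ ^ 2 + ‖y‖ ^ 2) / 2 ≤ saddleLyapunov B ε u y ∧
      saddleLyapunov B ε u y ≤ 3 * (‖u‖ ^ 2 + ‖y‖ ^ 2) / 2 := by
  have h := abs_le.1 (abs_two_mul_inner_adjoint_le hε hεB u y)
  unfold saddleLyapunov
  constructor <;> linarith

lemma hasDerivAt_saddleLyapunov {C : E →L[ℝ] E} {B : F →L[ℝ] E} (ε : ℝ) {u : ℝ → E} {y : ℝ → F}
    {t : ℝ} (hu : HasDerivAt u (-C (u t) - B (y t)) t) (hy : HasDerivAt y ((B†) (u t)) t) :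
    HasDerivAt (fun s => saddleLyapunov B ε (u s) (y s))
      (-2 * ⟪u t, C (u t)⟫ + 2 * ε * ‖(B†) (u t)‖ ^ 2 - 2 * ε * ⟪B (y t), C (u t)⟫
        - 2 * ε * ‖B (y t)‖ ^ 2) t := by
  have hBu : HasDerivAt (fun s => (B†) (u s)) ((B†) (-C (u t) - B (y t))) t :=
    (B†).hasFDerivAt.comp_hasDerivAt t hu
  refine ((hu.norm_sq.add hy.norm_sq).add ((hy.inner ℝ hBu).const_mul (2 * ε))).congr_deriv ?_
  rw [real_inner_self_eq_norm_sq, ContinuousLinearMap.adjoint_inner_right,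
    ContinuousLinearMap.adjoint_inner_right, real_inner_comm (u t)]
  simp only [inner_sub_right, inner_neg_right, real_inner_self_eq_norm_sq]
  ring

lemma saddleLyapunov_deriv_le {C : E →L[ℝ] E} {B : F →L[ℝ] E} {c σ ε : ℝ} (hε : 0 ≤ ε)
    (hC : ∀ v, c * ‖v‖ ^ 2 ≤ ⟪v, C v⟫) (hB : ∀ w, σ * ‖w‖ ≤ ‖B w‖) (hσ : 0 ≤ σ)
    (hεc : ε * (2 * ‖B‖ ^ 2 + ‖C‖ ^ 2) ≤ c) (u : E) (y : F) :
    -2 * ⟪u, C u⟫ + 2 * ε * ‖(B†) u‖ ^ 2 - 2 * ε * ⟪B y, C u⟫ - 2 * ε * ‖B y‖ ^ 2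
      ≤ -(c * ‖u‖ ^ 2 + ε * σ ^ 2 * ‖y‖ ^ 2) := by
  have hBu : ‖(B†) u‖ ≤ ‖B‖ * ‖u‖ := by
    simpa only [LinearIsometryEquiv.norm_map] using (B†).le_opNorm u
  have hCu : ‖C u‖ ≤ ‖C‖ * ‖u‖ := C.le_opNorm u
  have hcross : -2 * ⟪B y, C u⟫ ≤ ‖B y‖ ^ 2 + ‖C‖ ^ 2 * ‖u‖ ^ 2 := by
    have := neg_le_of_abs_le ((abs_real_inner_le_norm (B y) (C u)).trans
      (mul_le_mul_of_nonneg_left hCu (norm_nonneg _)))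
    nlinarith [sq_nonneg (‖B y‖ - ‖C‖ * ‖u‖)]
  have hBy : σ ^ 2 * ‖y‖ ^ 2 ≤ ‖B y‖ ^ 2 := by
    rw [← mul_pow]; exact pow_le_pow_left₀ (by positivity) (hB y) 2
  have hBu2 : ‖(B†) u‖ ^ 2 ≤ ‖B‖ ^ 2 * ‖u‖ ^ 2 := by
    rw [← mul_pow]; exact pow_le_pow_left₀ (norm_nonneg _) hBu 2
  nlinarith [hC u, mul_le_mul_of_nonneg_left hcross hε, mul_le_mul_of_nonneg_left hBy hε,
    mul_le_mul_of_nonneg_left hBu2 hε, mul_le_mul_of_nonneg_right hεc (sq_nonneg ‖u‖)]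

theorem tendsto_zero_of_saddle_flow {C : E →L[ℝ] E} {B : F →L[ℝ] E}
    (hC : ∃ c > 0, ∀ v, c * ‖v‖ ^ 2 ≤ ⟪v, C v⟫) {K : NNReal} (hB : AntilipschitzWith K B)
    {u : ℝ → E} {y : ℝ → F} (hu : ∀ t, 0 ≤ t → HasDerivAt u (-C (u t) - B (y t)) t)
    (hy : ∀ t, 0 ≤ t → HasDerivAt y ((B†) (u t)) t) :
    Tendsto (fun t => (u t, y t)) atTop (𝓝 0) := by
  obtain ⟨c, hc, hCc⟩ := hC
  set σ : ℝ := (K + 1)⁻¹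
  have hσ : 0 < σ := by positivity
  have hBσ (w : F) : σ * ‖w‖ ≤ ‖B w‖ := by
    rw [inv_mul_le_iff₀ (by positivity)]
    nlinarith [B.bound_of_antilipschitz hB w, norm_nonneg (B w)]
  obtain ⟨ε, hε, hεB, hεc⟩ : ∃ ε > 0, 2 * ε * ‖B‖ ≤ 1 ∧ ε * (2 * ‖B‖ ^ 2 + ‖C‖ ^ 2) ≤ c := by
    refine ⟨min (1 / (2 * ‖B‖ + 1)) (c / (2 * ‖B‖ ^ 2 + ‖C‖ ^ 2 + 1)), by positivity, ?_, ?_⟩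
    · have := min_le_left (1 / (2 * ‖B‖ + 1)) (c / (2 * ‖B‖ ^ 2 + ‖C‖ ^ 2 + 1))
      rw [le_div_iff₀ (by positivity)] at this
      nlinarith [norm_nonneg B]
    · have := min_le_right (1 / (2 * ‖B‖ + 1)) (c / (2 * ‖B‖ ^ 2 + ‖C‖ ^ 2 + 1))
      rw [le_div_iff₀ (by positivity)] at this
      nlinarith [norm_nonneg B]
  set V := fun t => saddleLyapunov B ε (u t) (y t)
  set m := min c (ε * σ ^ 2)
  have hm : 0 < m := lt_min hc (by positivity)
  have hdecay : ∀ t, 0 ≤ t → V t ≤ V 0 * Real.exp (-(2 * m / 3) * t) := by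
    refine fun t ht => le_mul_exp_of_hasDerivAt_le_mul
      (fun s hs => hasDerivAt_saddleLyapunov ε (hu s hs) (hy s hs)) (fun s _ => ?_) ht
    have hV := (saddleLyapunov_bounds hε.le hεB (u s) (y s)).2
    have hmin : m * (‖u s‖ ^ 2 + ‖y s‖ ^ 2) ≤ c * ‖u s‖ ^ 2 + ε * σ ^ 2 * ‖y s‖ ^ 2 := by
      nlinarith [min_le_left c (ε * σ ^ 2), min_le_right c (ε * σ ^ 2),
        sq_nonneg ‖u s‖, sq_nonneg ‖y s‖]
    nlinarith [saddleLyapunov_deriv_le hε.le hCc hBσ hσ.le hεc (u s) (y s)]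
  refine tendsto_prod_zero_of_norm_sq_add_le
    (g := fun t => 2 * (V 0 * Real.exp (-(2 * m / 3) * t))) ?_
    ((eventually_ge_atTop 0).mono fun t ht => ?_)
  · have hk : -(2 * m / 3) < 0 := by linarith
    simpa using ((Real.tendsto_exp_atBot.comp
      (tendsto_id.const_mul_atTop_of_neg hk)).const_mul (V 0)).const_mul 2
  · linarith [(saddleLyapunov_bounds hε.le hεB (u t) (y t)).1, hdecay t ht]

end SaddleFlow

lemma Matrix.toEuclideanCLM_transpose {n : Type*} [Fintype n] [DecidableEq n]
    (A : Matrix n n ℝ) : toEuclideanCLM (𝕜 := ℝ) Aᵀ = (toEuclideanCLM (𝕜 := ℝ) A)† := by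
  rw [← ContinuousLinearMap.star_eq_adjoint, ← map_star, star_eq_conjTranspose,
    conjTranspose_eq_transpose_of_trivial]

lemma Matrix.injective_toEuclideanCLM {n : Type*} [Fintype n] [DecidableEq n]
    {A : Matrix n n ℝ} (hA : IsUnit A) : Function.Injective (toEuclideanCLM (𝕜 := ℝ) A) := by
  intro v w h
  have := congrArg WithLp.ofLp h
  simp only [ofLp_toEuclideanCLM] at this
  exact WithLp.ofLp_injective _ (mulVec_injective_iff_isUnit.2 hA this)

lemma Matrix.PosDef.exists_pos_mul_sq_le_inner_toEuclideanCLM {n : Type*} [Fintype n]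
    [DecidableEq n] {C : Matrix n n ℝ} (hC : C.PosDef) :
    ∃ c > 0, ∀ v, c * ‖v‖ ^ 2 ≤ ⟪v, toEuclideanCLM (𝕜 := ℝ) C v⟫ := by
  refine exists_pos_mul_sq_le_inner_map_of_pos _ fun v hv => ?_
  rw [inner_toEuclideanCLM]
  simpa using hC.dotProduct_mulVec_pos (x := WithLp.ofLp v) (by simpa using hv)

theorem stmt11 {n : ℕ} (A C : Matrix (Fin n) (Fin n) ℝ) (hA : IsUnit A) (hC : C.PosDef)
    (η : ℝ) (lam x : ℝ → EuclideanSpace ℝ (Fin n))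
    (hlam : ∀ t : ℝ, 0 ≤ t → HasDerivAt lam
      (WithLp.toLp 2 ((-C + η • A).mulVec (lam t) - A.mulVec (x t)) : EuclideanSpace ℝ (Fin n)) t)
    (hx : ∀ t : ℝ, 0 ≤ t → HasDerivAt x
      (WithLp.toLp 2 ((Aᵀ + η ^ 2 • A - η • C).mulVec (lam t) - η • A.mulVec (x t)) :
        EuclideanSpace ℝ (Fin n)) t) :
    Tendsto (fun t => (lam t, x t)) atTop (nhds (0, 0)) := by
  set y := fun t => x t - η • lam t
  obtain ⟨K, -, hK⟩ := (LinearMap.injective_iff_antilipschitz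
    (toEuclideanCLM (𝕜 := ℝ) A : EuclideanSpace ℝ (Fin n) →ₗ[ℝ] EuclideanSpace ℝ (Fin n))).1
    (injective_toEuclideanCLM hA)
  have hlam' (t : ℝ) (ht : 0 ≤ t) : HasDerivAt lam
      (-toEuclideanCLM (𝕜 := ℝ) C (lam t) - toEuclideanCLM (𝕜 := ℝ) A (y t)) t :=
    (hlam t ht).congr_deriv <| by
      ext i
      simp only [add_mulVec, neg_mulVec, smul_mulVec, Pi.sub_apply, Pi.add_apply, Pi.neg_apply,
        Pi.smul_apply, smul_eq_mul, map_sub, map_smul, PiLp.sub_apply, PiLp.neg_apply,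
        ofLp_toEuclideanCLM, PiLp.smul_apply, y]
      ring
  have hy' (t : ℝ) (ht : 0 ≤ t) : HasDerivAt y (((toEuclideanCLM (𝕜 := ℝ) A)†) (lam t)) t := by
    refine ((hx t ht).sub ((hlam t ht).const_smul η)).congr_deriv ?_
    rw [← toEuclideanCLM_transpose]
    ext i
    simp only [sub_mulVec, add_mulVec, smul_mulVec, WithLp.toLp_sub, WithLp.toLp_add,
      WithLp.toLp_smul, neg_mulVec, WithLp.toLp_neg, PiLp.sub_apply, PiLp.add_apply,
      PiLp.smul_apply, smul_eq_mul, PiLp.neg_apply, ofLp_toEuclideanCLM]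
    ring
  have hlim := tendsto_zero_of_saddle_flow hC.exists_pos_mul_sq_le_inner_toEuclideanCLM hK hlam' hy'
  have hcont : Continuous fun p : EuclideanSpace ℝ (Fin n) × EuclideanSpace ℝ (Fin n) =>
      (p.1, p.2 + η • p.1) := by fun_prop
  simpa [y, Function.comp_def] using (hcont.tendsto 0).comp hlim
end
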